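/- arXiv:1204.0602 — 3 statements merged into one kernel-verified Lean document; each statement's English description precedes it below -/
import Mathlib

section
/- Let X be a smooth projective surface, f : X → Y a contraction of a (-1)-curve C, and ω an ample divisor on Y. Suppose E is a coherent sheaf (perverse sheaf) with Chern character ch(E) = (r, β, n), and suppose there is an exact sequence 0 → T → E → F → 0 where ch(T) = (0, aC, ch₂(T)) with a ≥ 0, ch₂(T) ≤ -a/2, F satisfies ch₁(F)² - 2·ch₀(F)·ch₂(F) ≥ 0, ch₀(F) ≥ 0, and C·ch₁(E) = C·ch₁(F) - a ≥ 0 (where C² = -1). Then ch₁(E)² - 2·ch₀(E)·ch₂(E) ≥ 0. -/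
/-!
Writing `ch(E) = ch(T) + ch(F)` and using `C² = -1`, the discriminant of `E` splits as
`Δ(F) + 2a(C·ch₁(F) - a) + a² - 2 ch₀(F) ch₂(T)`: every summand is nonnegative, the last one
because `ch₂(T) ≤ -a/2 ≤ 0`.
-/

lemma discriminant_add_torsion_eq (rF nF a t cβF βF2 : ℝ) :
    (βF2 + 2 * a * cβF - a ^ 2) - 2 * rF * (nF + t) =
      (βF2 - 2 * rF * nF) + 2 * a * (cβF - a) + a ^ 2 + 2 * rF * (-t) := by
  ring

theorem stmt_0 (r n rF nF a t cβF βF2 β2 : ℝ)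
    (ha : 0 ≤ a)
    (hr : r = rF)
    (hn : n = nF + t)
    (ht : t ≤ -a / 2)
    (hC : cβF - a ≥ 0)
    (hF : βF2 - 2 * rF * nF ≥ 0)
    (hrF : rF ≥ 0)
    (hβ : β2 = βF2 + 2 * a * cβF - a ^ 2) :
    β2 - 2 * r * n ≥ 0 := by
  subst r n β2
  rw [discriminant_add_torsion_eq]
  have hT : 0 ≤ 2 * rF * (-t) := mul_nonneg (by positivity) (by linarith)
  have hCT : 0 ≤ 2 * a * (cβF - a) := mul_nonneg (by positivity) hC
  have ha2 : 0 ≤ a ^ 2 := sq_nonneg a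
  linarith
end

section
/- Let N be a free abelian group of finite rank with a norm ‖·‖ on N ⊗ ℝ and Z : N → ℂ a group homomorphism. If a stability condition (Z, P) satisfies the support property, i.e. there is C > 0 with ‖E‖/|Z(E)| ≤ C for all semistable E, then the heart P(φ) of each phase is a finite length abelian category (noetherian and artinian). -/
open CategoryTheory CategoryTheory.Limits

/-!
Rotating `Z` by `e^{-iπφ}` and taking real parts gives a real-valued function `m` on `P(φ)`
which is additive on short exact sequences and equals `|Z|`, hence is positive on nonzero
objects. So `A ↦ m A` is strictly monotone on the subobjects of `E` and bounded by `m E`.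
By the support property the classes of the subobjects of `E` then lie in a ball of radius
`C · m E`, which contains only finitely many points of the discrete group `N`; so `m` takes
finitely many values on `Subobject E`, and a strictly monotone map to a finite order forces
both chain conditions.
-/

theorem StrictMono.wellFoundedLT_and_wellFoundedGT_of_finite_range {α β : Type*} [Preorder α]
    [Preorder β] {f : α → β} (hf : StrictMono f) (hfin : (Set.range f).Finite) :
    WellFoundedLT α ∧ WellFoundedGT α := by
  have : Finite (Set.range f) := hfin.to_subtype
  have hf' : StrictMono (Set.rangeFactorization f) := fun _ _ h ↦ hf h
  exact ⟨hf'.wellFoundedLT, hf'.wellFoundedGT⟩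

theorem AddSubgroup.finite_setOf_norm_le {V : Type*} [NormedAddCommGroup V] [ProperSpace V]
    (N : AddSubgroup V) [DiscreteTopology N] (R : ℝ) : {n : N | ‖(n : V)‖ ≤ R}.Finite := by
  have hcompact : IsCompact (Subtype.val ⁻¹' Metric.closedBall (0 : V) R : Set N) :=
    AddSubgroup.isClosed_of_discrete.isClosedEmbedding_subtypeVal.isCompact_preimage
      (isCompact_closedBall 0 R)
  simpa [Set.preimage, dist_zero_right] using hcompact.finite_of_discrete

theorem Complex.re_mul_exp_neg_eq_norm {z : ℂ} {r θ : ℝ} (hr : 0 ≤ r)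
    (hz : z = r * exp (θ * I)) : (z * exp (-(θ * I))).re = ‖z‖ := by
  have hrot : z * exp (-(θ * I)) = r := by
    rw [hz, mul_assoc, ← exp_add, add_neg_cancel, exp_zero, mul_one]
  rw [hrot, hz, norm_mul, norm_exp_ofReal_mul_I, mul_one, ofReal_re, norm_real,
    Real.norm_of_nonneg hr]

namespace CategoryTheory

variable {P : Type*} [Category P] [Abelian P]

theorem ShortComplex.shortExact_cokernel {X Y : P} (f : X ⟶ Y) [Mono f] :
    (ShortComplex.mk f (cokernel.π f) (cokernel.condition f)).ShortExact :=
  { exact := ShortComplex.exact_cokernel f }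

theorem Subobject.not_isZero_cokernel_ofLE {E : P} {A B : Subobject E} (h : A < B) :
    ¬ IsZero (cokernel (Subobject.ofLE A B h.le)) := by
  intro hzero
  have : Epi (Subobject.ofLE A B h.le) := Preadditive.epi_of_isZero_cokernel _ hzero
  have : IsIso (Subobject.ofLE A B h.le) := isIso_of_mono_of_epi _
  exact h.not_ge (Subobject.le_of_comm (inv (Subobject.ofLE A B h.le)) (by simp))

def IsAdditiveOnShortExact {M : Type*} [Add M] (f : P → M) : Prop :=
  ∀ S : ShortComplex P, S.ShortExact → f S.X₂ = f S.X₁ + f S.X₃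

namespace IsAdditiveOnShortExact

variable {M : Type*}

theorem comp {M' : Type*} [AddZeroClass M] [AddZeroClass M'] {f : P → M}
    (hf : IsAdditiveOnShortExact f) (g : M →+ M') : IsAdditiveOnShortExact (g ∘ f) :=
  fun S hS ↦ by simp only [Function.comp_apply, hf S hS, map_add]

theorem apply_eq_zero_of_isZero [AddMonoid M] [IsLeftCancelAdd M] {f : P → M}
    (hf : IsAdditiveOnShortExact f) {X : P} (hX : IsZero X) : f X = 0 :=
  left_eq_add.mp <| hf (ShortComplex.mk (𝟙 X) (𝟙 X) (hX.eq_of_src _ _))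
    ⟨ShortComplex.exact_of_isZero_X₂ _ hX⟩

variable [AddCommMonoid M] [PartialOrder M] {f : P → M}

theorem apply_subobject_le [IsOrderedAddMonoid M] (hf : IsAdditiveOnShortExact f)
    (hnonneg : ∀ X, 0 ≤ f X) {E : P} (A : Subobject E) : f A ≤ f E := by
  rw [hf _ (ShortComplex.shortExact_cokernel A.arrow)]
  exact le_add_of_nonneg_right (hnonneg _)

theorem strictMono_subobject [IsOrderedCancelAddMonoid M] (hf : IsAdditiveOnShortExact f)
    (hpos : ∀ X, ¬ IsZero X → 0 < f X) (E : P) :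
    StrictMono fun A : Subobject E ↦ f A := by
  intro A B h
  dsimp only
  rw [show f B = _ from hf _ (ShortComplex.shortExact_cokernel (Subobject.ofLE A B h.le))]
  exact lt_add_of_pos_right _ (hpos _ (Subobject.not_isZero_cokernel_ofLE h))

end IsAdditiveOnShortExact

end CategoryTheory

theorem stmt_11 {V : Type*} [NormedAddCommGroup V] [NormedSpace ℝ V]
    [FiniteDimensional ℝ V]
    (N : AddSubgroup V) [DiscreteTopology N]
    {P : Type*} [Category P] [Abelian P]
    (v : P → N) (Z : N →+ ℂ) (φ : ℝ)
    (hadd : ∀ S : ShortComplex P, S.ShortExact → v S.X₂ = v S.X₁ + v S.X₃)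
    (hZ : ∀ E : P, ¬ IsZero E →
      ∃ r : ℝ, 0 < r ∧ Z (v E) = r * Complex.exp (Real.pi * φ * Complex.I))
    (hsupp : ∃ C : ℝ, 0 < C ∧ ∀ E : P, ¬ IsZero E →
      ‖(v E : V)‖ ≤ C * ‖Z (v E)‖) :
    ∀ E : P, WellFoundedGT (Subobject E) ∧ WellFoundedLT (Subobject E) := by
  obtain ⟨C, hC, hsupp⟩ := hsupp
  have hv : IsAdditiveOnShortExact v := hadd
  let mass : N →+ ℝ := Complex.reAddGroupHom.comp
    ((AddMonoidHom.mulRight (Complex.exp (-((Real.pi * φ : ℝ) * Complex.I)))).comp Z)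
  have hm : IsAdditiveOnShortExact (mass ∘ v) := hv.comp mass
  have hmass : ∀ X, mass (v X) = ‖Z (v X)‖ := by
    intro X
    by_cases hX : IsZero X
    · simp [hv.apply_eq_zero_of_isZero hX]
    · obtain ⟨r, hr, hZX⟩ := hZ X hX
      exact Complex.re_mul_exp_neg_eq_norm hr.le (by rw [hZX]; push_cast; rfl)
  have hmass_pos : ∀ X, ¬ IsZero X → 0 < mass (v X) := by
    intro X hX
    obtain ⟨r, hr, hZX⟩ := hZ X hX
    rw [hmass, norm_pos_iff, hZX]
    exact mul_ne_zero (Complex.ofReal_ne_zero.mpr hr.ne') (Complex.exp_ne_zero _)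
  intro E
  refine ((hm.strictMono_subobject hmass_pos E).wellFoundedLT_and_wellFoundedGT_of_finite_range
    ?_).symm
  refine ((N.finite_setOf_norm_le (C * mass (v E))).image mass).subset ?_
  rintro _ ⟨A, rfl⟩
  refine ⟨v A, ?_, rfl⟩
  by_cases hA : IsZero (A : P)
  · simpa [hv.apply_eq_zero_of_isZero hA, hmass] using mul_nonneg hC.le (norm_nonneg _)
  calc ‖(v A : V)‖ ≤ C * mass (v A) := by rw [hmass]; exact hsupp A hA
    _ ≤ C * mass (v E) := by
      gcongr
      exact hm.apply_subobject_le (fun X ↦ (hmass X).ge.trans' (norm_nonneg _)) A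
end

section
/- Let w, C_ω > 0 and let E have invariants r = ch₀, β = β₊ + β₋ (with β₊ proportional to f*ω, β₋ ⊥ f*ω, β₋² ≤ 0), n = ch₂, satisfying the inequality β₊² + β₋² - 2rn + C_ω β₊² ≥ -1, where β₊²ω² = (β₊·f*ω)². Then (-β₋²)/|Z|² ≤ (1 + (C_ω+1)β₊² - 2rn)/((-n + rw/2)² + β₊²w), where |Z|² = (-n + rw/2)² + (β₊·f*ω)². Moreover, if rn < 0, setting u = -n/r > 0, this is bounded above by a constant depending only on w and C_ω. -/
/-!
STATEMENT 13 (proof of the support property, Subsection 3.7).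
Notation: `r = ch₀(E) ∈ ℤ`, `n = ch₂(E) ∈ (1/2)ℤ`, `bp2 = β₊² ≥ 0`,
`bm2 = β₋² ≤ 0`, `w = ω² > 0`; the Hodge index theorem gives
`β₊²·ω² = (β₊·f*ω)²`, so `|Z_{f*ω}(E)|² = (-n + rw/2)² + bp2·w`.
The BG-type inequality `β₊² + β₋² - 2rn + C_ω β₊² ≥ -1` yields the stated
bound on `-β₋²/|Z|²`, and for `rn < 0` this bound is uniform in `E`.
-/
set_option maxHeartbeats 1600000 in
theorem stmt_13 (w Cω : ℝ) (hw : 0 < w) (hCω : 0 < Cω) :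
    (∀ (r : ℤ) (n bp2 bm2 : ℝ), (∃ m : ℤ, n = (m : ℝ) / 2) → 0 ≤ bp2 → bm2 ≤ 0 →
      bp2 + bm2 - 2 * (r : ℝ) * n + Cω * bp2 ≥ -1 →
      (-bm2) / ((-n + (r : ℝ) * w / 2) ^ 2 + bp2 * w) ≤
        (1 + (Cω + 1) * bp2 - 2 * (r : ℝ) * n) / ((-n + (r : ℝ) * w / 2) ^ 2 + bp2 * w)) ∧
    ∃ K : ℝ, 0 < K ∧ ∀ (r : ℤ) (n bp2 bm2 : ℝ), (∃ m : ℤ, n = (m : ℝ) / 2) →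
      0 ≤ bp2 → bm2 ≤ 0 →
      bp2 + bm2 - 2 * (r : ℝ) * n + Cω * bp2 ≥ -1 →
      (r : ℝ) * n < 0 →
      (-bm2) / ((-n + (r : ℝ) * w / 2) ^ 2 + bp2 * w) ≤ K := by
  constructor
  · intro r n bp2 bm2 _ hbp hbm hBG
    have hD0 : 0 ≤ (-n + (r : ℝ) * w / 2) ^ 2 + bp2 * w := by positivity
    have hnum : -bm2 ≤ 1 + (Cω + 1) * bp2 - 2 * (r : ℝ) * n := by nlinarith
    gcongr
  · refine ⟨(Cω + 1) / w + 4 / (1 + w) ^ 2 + 1 / w, by positivity, ?_⟩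
    intro r n bp2 bm2 hhalf hbp hbm hBG hrn
    obtain ⟨m, hm⟩ := hhalf
    set a : ℝ := |n| with ha
    set b : ℝ := |(r : ℝ)| with hb
    clear_value a b
    have hn0 : n ≠ 0 := by rintro rfl; simp at hrn
    have hr0 : (r : ℝ) ≠ 0 := by rintro h; rw [h] at hrn; simp at hrn
    have hrz : r ≠ 0 := by exact_mod_cast hr0
    have hm0 : m ≠ 0 := by rintro rfl; simp at hm; exact hn0 hm
    have ha1 : (1:ℝ)/2 ≤ a := by
      have h1 : (1:ℤ) ≤ |m| := Int.one_le_abs hm0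
      have h2 : (1:ℝ) ≤ |(m:ℝ)| := by
        have : ((1:ℤ):ℝ) ≤ ((|m|:ℤ):ℝ) := by exact_mod_cast h1
        simpa [Int.cast_abs] using this
      rw [ha, hm, abs_div, abs_of_pos (by norm_num : (0:ℝ) < 2)]
      linarith
    have hb1 : (1:ℝ) ≤ b := by
      have h1 : (1:ℤ) ≤ |r| := Int.one_le_abs hrz
      have : ((1:ℤ):ℝ) ≤ ((|r|:ℤ):ℝ) := by exact_mod_cast h1
      simpa [hb, Int.cast_abs] using this
    have hnr : n * (r:ℝ) < 0 := by
      have := hrn; nlinarith [hrn]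
    have hab : a * b = -((r:ℝ) * n) := by
      rw [ha, hb, ← abs_mul, abs_of_neg hnr]
      try ring
    have hsq : (-n + (r : ℝ) * w / 2) ^ 2 = (a + b * w / 2) ^ 2 := by
      rcases mul_neg_iff.mp hrn with ⟨hr, hn⟩ | ⟨hr, hn⟩
      · rw [ha, hb, abs_of_neg hn, abs_of_pos hr]; try ring
      · rw [ha, hb, abs_of_pos hn, abs_of_neg hr]; try ring
    have ha0 : 0 < a := lt_of_lt_of_le (by norm_num) ha1
    have hb0 : 0 < b := lt_of_lt_of_le one_pos hb1
    have hDeq : (-n + (r : ℝ) * w / 2) ^ 2 + bp2 * w = (a + b * w / 2) ^ 2 + bp2 * w := by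
      rw [hsq]
    have hDpos : 0 < (-n + (r : ℝ) * w / 2) ^ 2 + bp2 * w := by
      rw [hDeq]; positivity
    have hnum : -bm2 ≤ 1 + (Cω + 1) * bp2 - 2 * (r : ℝ) * n := by nlinarith
    rw [div_le_iff₀ hDpos, hDeq]
    have hpw : (0:ℝ) < (1 + w) ^ 2 := by positivity
    have h1 : (1:ℝ) ≤ 4 / (1 + w) ^ 2 * (a + b * w / 2) ^ 2 := by
      have hsum : (1 + w) / 2 ≤ a + b * w / 2 := by nlinarith
      have hsq2 : ((1 + w) / 2) ^ 2 ≤ (a + b * w / 2) ^ 2 := by nlinarith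
      rw [div_mul_eq_mul_div, le_div_iff₀ hpw]
      nlinarith
    have h2 : 2 * a * b ≤ 1 / w * (a + b * w / 2) ^ 2 := by
      have hsq3 : 0 ≤ (a - b * w / 2) ^ 2 := sq_nonneg _
      rw [div_mul_eq_mul_div, le_div_iff₀ hw]
      nlinarith
    have h3 : (Cω + 1) * bp2 = (Cω + 1) / w * (bp2 * w) := by
      field_simp
      try ring
    have hd1 : (a + b * w / 2) ^ 2 ≤ (a + b * w / 2) ^ 2 + bp2 * w := by
      have := mul_nonneg hbp hw.le; linarith
    have hd2 : bp2 * w ≤ (a + b * w / 2) ^ 2 + bp2 * w := by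
      have := sq_nonneg (a + b * w / 2); linarith
    have hK1 : (0:ℝ) ≤ (Cω + 1) / w := by positivity
    have hK2 : (0:ℝ) ≤ 4 / (1 + w) ^ 2 := by positivity
    have hK3 : (0:ℝ) ≤ 1 / w := by positivity
    have t1 := mul_le_mul_of_nonneg_left hd1 hK2
    have t2 := mul_le_mul_of_nonneg_left hd2 hK1
    have t3 := mul_le_mul_of_nonneg_left hd1 hK3
    have hnum2 : -bm2 ≤ 1 + (Cω + 1) * bp2 + 2 * (a * b) := by
      linarith [hnum, hab]
    linarith [h1, h2, h3, t1, t2, t3, hnum2]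
end
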